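/- arXiv:2306.12202 — 3 statements merged into one kernel-verified Lean document; each statement's English description precedes it below -/
import Mathlib

section
/- For a random variable X ~ GPD(ξ, σ) with 0 < ξ < 1 and σ > 0, and 0 < p < 1, the Conditional Value at Risk is CVaR_p(X) = (σ/ξ)·((1-p)^(-ξ)/(1-ξ) - 1). -/
/-!
The function `x ↦ x f(x)` has the elementary antiderivative
`-(x + σ)/(1 - ξ) · (1 + ξx/σ)^(-1/ξ)`, which tends to `0` at infinity because `1/ξ > 1`.
At `x = VaR_p` the base `1 + ξx/σ` equals `(1 - p)^(-ξ)`, so the power collapses to `1 - p`,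
cancelling the normalisation `1/(1 - p)`.
-/

open Set Filter MeasureTheory Topology

noncomputable def gpdDensity (ξ σ x : ℝ) : ℝ := (1 / σ) * (1 + ξ * x / σ) ^ (-1 - 1 / ξ)

noncomputable def gpdTailMoment (ξ σ x : ℝ) : ℝ :=
  (x + σ) / (1 - ξ) * (1 + ξ * x / σ) ^ (-1 / ξ)

theorem tendsto_affine_mul_rpow_neg_atTop {r : ℝ} (hr : 1 < r) (a b : ℝ) :
    Tendsto (fun u : ℝ => (a * u + b) * u ^ (-r)) atTop (𝓝 0) := by
  have hlim : Tendsto (fun u : ℝ => a * u ^ (-(r - 1)) + b * u ^ (-r)) atTop (𝓝 0) := by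
    simpa using ((tendsto_rpow_neg_atTop (sub_pos.2 hr)).const_mul a).add
      ((tendsto_rpow_neg_atTop (zero_lt_one.trans hr)).const_mul b)
  refine hlim.congr' ?_
  filter_upwards [eventually_gt_atTop 0] with u hu
  rw [neg_sub, Real.rpow_sub hu, Real.rpow_one, Real.rpow_neg hu.le]
  field_simp

theorem hasDerivAt_neg_gpdTailMoment {ξ σ x : ℝ} (hξ : ξ ≠ 0) (hξ1 : ξ ≠ 1) (hσ : σ ≠ 0)
    (hx : 0 < 1 + ξ * x / σ) :
    HasDerivAt (fun x => -gpdTailMoment ξ σ x) (x * gpdDensity ξ σ x) x := by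
  have hbase : HasDerivAt (fun x : ℝ => 1 + ξ * x / σ) (ξ / σ) x := by
    simpa using (((hasDerivAt_id x).const_mul ξ).div_const σ).const_add 1
  have hpow := hbase.rpow_const (p := -1 / ξ) (Or.inl hx.ne')
  refine ((((hasDerivAt_id x).add_const σ).div_const (1 - ξ)).mul hpow).neg.congr_deriv ?_
  have h1ξ : 1 - ξ ≠ 0 := sub_ne_zero.2 (Ne.symm hξ1)
  rw [gpdDensity, show -1 / ξ = (-1 - 1 / ξ) + 1 by ring, Real.rpow_add hx, Real.rpow_one,
    show (-1 - 1 / ξ) + 1 - 1 = -1 - 1 / ξ by ring]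
  generalize (1 + ξ * x / σ) ^ (-1 - 1 / ξ) = t
  simp only [id]
  field_simp
  ring

theorem tendsto_gpdTailMoment_atTop {ξ σ : ℝ} (hξ0 : 0 < ξ) (hξ1 : ξ < 1) (hσ : 0 < σ) :
    Tendsto (gpdTailMoment ξ σ) atTop (𝓝 0) := by
  have hbase : Tendsto (fun x : ℝ => 1 + ξ * x / σ) atTop atTop :=
    tendsto_atTop_add_const_left _ 1 ((tendsto_id.const_mul_atTop hξ0).atTop_div_const hσ)
  have hr : 1 < 1 / ξ := by rwa [lt_div_iff₀ hξ0, one_mul]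
  -- `x + σ` is affine in the base `1 + ξx/σ`
  have h := ((tendsto_affine_mul_rpow_neg_atTop hr (σ / ξ) (σ - σ / ξ)).comp hbase).div_const (1 - ξ)
  rw [zero_div] at h
  refine h.congr fun x => ?_
  simp only [Function.comp_apply, gpdTailMoment]
  field_simp
  ring

theorem integral_Ioi_mul_gpdDensity {ξ σ v : ℝ} (hξ0 : 0 < ξ) (hξ1 : ξ < 1) (hσ : 0 < σ)
    (hv : 0 ≤ v) :
    ∫ x in Ioi v, x * gpdDensity ξ σ x = gpdTailMoment ξ σ v := by
  have hbase : ∀ x, 0 ≤ x → 0 < 1 + ξ * x / σ := fun x hx => by positivity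
  have hderiv : ∀ x ∈ Ici v, HasDerivAt (fun x => -gpdTailMoment ξ σ x)
      (x * gpdDensity ξ σ x) x := fun x hx =>
    hasDerivAt_neg_gpdTailMoment hξ0.ne' hξ1.ne hσ.ne' (hbase x (hv.trans hx))
  have hnonneg : ∀ x ∈ Ioi v, 0 ≤ x * gpdDensity ξ σ x := fun x hx => by
    have hx0 : 0 ≤ x := hv.trans hx.le
    have := hbase x hx0
    unfold gpdDensity
    positivity
  rw [integral_Ioi_of_hasDerivAt_of_nonneg' hderiv hnonneg
    (tendsto_gpdTailMoment_atTop hξ0 hξ1 hσ).neg, neg_zero, zero_sub, neg_neg]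

/-- For X ~ GPD(ξ,σ) with 0 < ξ < 1, σ > 0, and 0 < p < 1, the tail-expectation
CVaR_p(X) = (1/(1-p))·∫_{VaR_p}^{∞} x f(x) dx equals (σ/ξ)((1-p)^(-ξ)/(1-ξ) - 1),
where f(x) = (1/σ)(1+ξx/σ)^(-1-1/ξ) and VaR_p = (σ/ξ)((1-p)^(-ξ) - 1). -/
theorem gpd_cvar (ξ σ p : ℝ) (hξ0 : 0 < ξ) (hξ1 : ξ < 1) (hσ : 0 < σ)
    (hp : 0 < p) (hp1 : p < 1) :
    (1 / (1 - p)) *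
        ∫ x in Set.Ioi (σ / ξ * ((1 - p) ^ (-ξ) - 1)),
          x * ((1 / σ) * (1 + ξ * x / σ) ^ (-1 - 1 / ξ))
      = σ / ξ * ((1 - p) ^ (-ξ) / (1 - ξ) - 1) := by
  have hq : 0 < 1 - p := sub_pos.2 hp1
  have ha : 1 ≤ (1 - p) ^ (-ξ) :=
    Real.one_le_rpow_of_pos_of_le_one_of_nonpos hq (by linarith) (by linarith)
  have hbase : 1 + ξ * (σ / ξ * ((1 - p) ^ (-ξ) - 1)) / σ = (1 - p) ^ (-ξ) := by
    field_simp
    ring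
  have hsurvival : ((1 - p) ^ (-ξ)) ^ (-1 / ξ) = 1 - p := by
    rw [← Real.rpow_mul hq.le, show -ξ * (-1 / ξ) = 1 by field_simp, Real.rpow_one]
  have htail := integral_Ioi_mul_gpdDensity hξ0 hξ1 hσ
    (mul_nonneg (div_pos hσ hξ0).le (sub_nonneg.2 ha))
  unfold gpdDensity gpdTailMoment at htail
  rw [htail, hbase, hsurvival]
  have h1ξ : 1 - ξ ≠ 0 := by linarith
  field_simp
  ring
end

section
/- For X ~ GPD(ξ, σ) with 0 < ξ < 1, CVaR_p(X) can equivalently be computed as (1/(1-p))·∫_p^1 VaR_q(X) dq, and this integral equals (σ/ξ)·((1-p)^(-ξ)/(1-ξ) - 1). -/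
/-- Quantile-integral representation of CVaR for the GPD: for 0 < ξ < 1, σ > 0,
0 < p < 1, (1/(1-p))·∫_p^1 VaR_q dq = (σ/ξ)((1-p)^(-ξ)/(1-ξ) - 1), where
VaR_q = (σ/ξ)((1-q)^(-ξ) - 1). -/
theorem gpd_cvar_quantile (ξ σ p : ℝ) (hξ0 : 0 < ξ) (hξ1 : ξ < 1) (hσ : 0 < σ)
    (hp : 0 < p) (hp1 : p < 1) :
    (1 / (1 - p)) * ∫ q in Set.Ioo p 1, σ / ξ * ((1 - q) ^ (-ξ) - 1)
      = σ / ξ * ((1 - p) ^ (-ξ) / (1 - ξ) - 1) := by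
  have h1p : (0:ℝ) < 1 - p := by linarith
  have hr : (-1:ℝ) < -ξ := by linarith
  have hint : IntervalIntegrable (fun q => (1 - q) ^ (-ξ)) MeasureTheory.volume p 1 := by
    have := (intervalIntegral.intervalIntegrable_rpow' (a := 1 - 1) (b := 1 - p) hr)
    simpa using (this.comp_sub_left 1).symm
  have key : (∫ q in p..1, (1 - q) ^ (-ξ)) = (1 - p) ^ (1 - ξ) / (1 - ξ) := by
    have := intervalIntegral.integral_comp_sub_left (a := p) (b := 1)
      (fun x => x ^ (-ξ)) 1
    rw [this]
    rw [integral_rpow (Or.inl hr)]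
    simp
    rw [Real.zero_rpow (by linarith)]
    ring_nf
  have hIoo : (∫ q in Set.Ioo p 1, σ / ξ * ((1 - q) ^ (-ξ) - 1))
      = ∫ q in p..1, σ / ξ * ((1 - q) ^ (-ξ) - 1) := by
    rw [intervalIntegral.integral_of_le hp1.le, MeasureTheory.integral_Ioc_eq_integral_Ioo]
  rw [hIoo, intervalIntegral.integral_const_mul,
    intervalIntegral.integral_sub hint intervalIntegrable_const, key,
    intervalIntegral.integral_const]
  have hξ1' : (1:ℝ) - ξ ≠ 0 := by linarith
  have hpow : (1 - p) ^ (1 - ξ) = (1 - p) * (1 - p) ^ (-ξ) := by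
    rw [← Real.rpow_one_add' (by positivity) (by linarith)]
    ring_nf
  rw [hpow]
  field_simp
  ring
end

section
/- Let X be an integrable continuous random variable, u its p_u-quantile, and X_u its excess distribution over u. Then for p_u < p < 1, CVaR_p(X) = u + CVaR_{p_t}(X_u) with p_t = 1 - (1-p)/(1-p_u). -/
open MeasureTheory Set Filter Topology

/-!
Since F is strictly increasing and continuous, the p-quantile of X is the point v with F v = p,
and the excess quantile level 1 - (1 - p) / (1 - p_u) is reached by F(u + ·) exactly at v - u.
The translation y = x - u turns the tail integral of the excess density over (v - u, ∞) into
(∫_{(v,∞)} x f(x) dx - u (1 - p)) / (1 - p_u), using that f integrates to 1 - F v over (v, ∞).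
-/

lemma StrictMono.csInf_setOf_le_apply {α β : Type*} [ConditionallyCompleteLinearOrder α]
    [LinearOrder β] {F : α → β} (hF : StrictMono F) {v : α} {p : β} (hv : F v = p) :
    sInf {c | p ≤ F c} = v := by
  simp only [← hv, hF.le_iff_le]
  exact csInf_Ici

lemma exists_apply_eq_of_tendsto_atTop {F : ℝ → ℝ} (hF : Continuous F) {m u p : ℝ}
    (htop : Tendsto F atTop (𝓝 m)) (hu : F u ≤ p) (hp : p < m) : ∃ v, F v = p := by
  obtain ⟨b, hb⟩ := (htop.eventually (lt_mem_nhds hp)).exists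
  exact intermediate_value_univ u b hF ⟨hu, hb.le⟩

lemma setIntegral_Ioi_comp_const_add {E : Type*} [NormedAddCommGroup E] [NormedSpace ℝ E]
    (g : ℝ → E) (u a : ℝ) : ∫ y in Ioi (a - u), g (u + y) = ∫ x in Ioi a, g x := by
  have hpre : (fun y => u + y) ⁻¹' Ioi a = Ioi (a - u) := by
    ext y
    simp [sub_lt_iff_lt_add']
  rw [← hpre]
  exact (measurePreserving_add_left volume u).setIntegral_preimage_emb
    (measurableEmbedding_addLeft u) g (Ioi a)

section TailIntegral

variable {F f : ℝ → ℝ} {m : ℝ} (hmono : Monotone F) (hdens : ∀ x, HasDerivAt F (f x) x)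
  (htop : Tendsto F atTop (𝓝 m))
include hmono hdens htop

lemma integral_Ioi_of_hasDerivAt_of_monotone (v : ℝ) : ∫ x in Ioi v, f x = m - F v :=
  integral_Ioi_of_hasDerivAt_of_nonneg (hdens v).continuousAt.continuousWithinAt
    (fun x _ => hdens x) (fun x _ => (hdens x).nonneg_of_monotone hmono) htop

lemma integrableOn_Ioi_of_hasDerivAt_of_monotone (v : ℝ) : IntegrableOn f (Ioi v) :=
  integrableOn_Ioi_deriv_of_nonneg (hdens v).continuousAt.continuousWithinAt
    (fun x _ => hdens x) (fun x _ => (hdens x).nonneg_of_monotone hmono) htop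

lemma integral_Ioi_sub_mul_of_hasDerivAt {u v : ℝ}
    (hint : IntegrableOn (fun x => x * f x) (Ioi v)) :
    ∫ x in Ioi v, (x - u) * f x = (∫ x in Ioi v, x * f x) - u * (m - F v) := by
  simp_rw [sub_mul]
  rw [integral_sub hint
      ((integrableOn_Ioi_of_hasDerivAt_of_monotone hmono hdens htop v).const_mul u),
    integral_const_mul, integral_Ioi_of_hasDerivAt_of_monotone hmono hdens htop]

end TailIntegral

lemma excess_level_le_iff {pu p a : ℝ} (hpu : pu < 1) :
    1 - (1 - p) / (1 - pu) ≤ (a - pu) / (1 - pu) ↔ p ≤ a := by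
  have hpos : 0 < 1 - pu := sub_pos.2 hpu
  rw [show 1 - (1 - p) / (1 - pu) = (p - pu) / (1 - pu) by field_simp; ring,
    div_le_div_iff_of_pos_right hpos, sub_le_sub_iff_right]

theorem cvar_excess_general (F f : ℝ → ℝ) (u pu p : ℝ)
    (hmono : StrictMono F)
    (htop : Filter.Tendsto F Filter.atTop (nhds 1))
    (hdens : ∀ x, HasDerivAt F (f x) x)
    (hpu1 : pu < 1) (hu : F u = pu) (hp : pu < p) (hp1 : p < 1)
    (hint : MeasureTheory.IntegrableOn (fun x => x * f x)
      (Set.Ioi (sInf {c : ℝ | p ≤ F c}))) :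
    (1 / (1 - p)) * ∫ x in Set.Ioi (sInf {c : ℝ | p ≤ F c}), x * f x
      = u + (1 / (1 - (1 - (1 - p) / (1 - pu)))) *
          ∫ y in Set.Ioi (sInf {y : ℝ |
              1 - (1 - p) / (1 - pu) ≤ (F (u + y) - F u) / (1 - F u)}),
            y * (f (u + y) / (1 - pu)) := by
  have hF : Continuous F := continuous_iff_continuousAt.2 fun x => (hdens x).continuousAt
  obtain ⟨v, hv⟩ := exists_apply_eq_of_tendsto_atTop hF htop (hu ▸ hp.le) hp1
  have hquantile : sInf {c : ℝ | p ≤ F c} = v := hmono.csInf_setOf_le_apply hv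
  have hexcess_quantile : sInf {y : ℝ |
      1 - (1 - p) / (1 - pu) ≤ (F (u + y) - F u) / (1 - F u)} = v - u := by
    simp only [hu, excess_level_le_iff hpu1]
    exact (hmono.comp (strictMono_id.const_add u)).csInf_setOf_le_apply
      (by simp [hv])
  have hshift : ∫ y in Ioi (v - u), y * (f (u + y) / (1 - pu))
      = ((∫ x in Ioi v, x * f x) - u * (1 - p)) / (1 - pu) := by
    simp_rw [← hv, ← integral_Ioi_sub_mul_of_hasDerivAt hmono.monotone hdens htop
      (hquantile ▸ hint), ← setIntegral_Ioi_comp_const_add _ u v, add_sub_cancel_left,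
      ← integral_div, mul_div_assoc]
  rw [hquantile, hexcess_quantile, hshift, sub_sub_cancel]
  have : 1 - p ≠ 0 := sub_ne_zero.2 hp1.ne'
  have : 1 - pu ≠ 0 := sub_ne_zero.2 hpu1.ne'
  field_simp
  ring

/-- CVaR decomposition over a threshold: for an integrable continuous random
variable with continuous strictly increasing CDF F, density f, F(u) = p_u, and
excess density f_u(y) = f(u+y)/(1-p_u): for p_u < p < 1,
CVaR_p(X) = u + CVaR_{p_t}(X_u) with p_t = 1-(1-p)/(1-p_u), where CVaR is the
tail expectation beyond the corresponding quantile. -/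
theorem cvar_excess (F f : ℝ → ℝ) (u pu p : ℝ)
    (hF : Continuous F) (hmono : StrictMono F)
    (hbot : Filter.Tendsto F Filter.atBot (nhds 0))
    (htop : Filter.Tendsto F Filter.atTop (nhds 1))
    (hdens : ∀ x, HasDerivAt F (f x) x)
    (hpu : 0 < pu) (hpu1 : pu < 1) (hu : F u = pu) (hp : pu < p) (hp1 : p < 1)
    (hint : MeasureTheory.IntegrableOn (fun x => x * f x)
      (Set.Ioi (sInf {c : ℝ | p ≤ F c}))) :
    (1 / (1 - p)) * ∫ x in Set.Ioi (sInf {c : ℝ | p ≤ F c}), x * f x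
      = u + (1 / (1 - (1 - (1 - p) / (1 - pu)))) *
          ∫ y in Set.Ioi (sInf {y : ℝ |
              1 - (1 - p) / (1 - pu) ≤ (F (u + y) - F u) / (1 - F u)}),
            y * (f (u + y) / (1 - pu)) :=
  cvar_excess_general F f u pu p hmono htop hdens hpu1 hu hp hp1 hint
end
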